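/- arXiv:2107.09431 — 2 statements merged into one kernel-verified Lean document; each statement's English description precedes it below -/
import Mathlib

section
/- For every A-bounded operator T and every α ∈ [0,1], the quantity ‖T‖_{A,α} := sup over ‖x‖_A = 1 of sqrt(α|⟨Tx,x⟩_A|² + (1−α)‖Tx‖_A²) defines a seminorm on the algebra of A-bounded operators. -/
/-
The `A`-semi-inner product is the inner product of `H` transported by `A^{1/2}`:
`⟨x, y⟩_A = ⟨A^{1/2} x, A^{1/2} y⟩`, so the Cauchy–Schwarz and triangle inequalities for
`‖·‖_A` are those of `H`. For a fixed `A`-unit vector `x`, the map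
`T ↦ √(α |⟨T x, x⟩_A|² + (1 - α) ‖T x‖_A²)` is a weighted `ℓ²` combination of two seminorms in
`T`, hence a seminorm by Minkowski's inequality. A-boundedness bounds these uniformly in `x`,
and a bounded supremum of seminorms is a seminorm.
-/

open scoped ComplexOrder
open ContinuousLinearMap Filter Topology

variable {H : Type*} [NormedAddCommGroup H] [InnerProductSpace ℂ H] [CompleteSpace H]

/-- The A-semi-inner product `⟨x, y⟩_A = ⟨A x, y⟩` (Mathlib convention: conjugate
linear in the first variable). -/
noncomputable def aInner (A : H →L[ℂ] H) (x y : H) : ℂ := inner ℂ (A x) y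

/-- The A-seminorm `‖x‖_A = sqrt ⟨x, x⟩_A`. -/
noncomputable def aNorm (A : H →L[ℂ] H) (x : H) : ℝ := Real.sqrt (aInner A x x).re

/-- `T` is A-bounded. -/
def ABounded (A T : H →L[ℂ] H) : Prop := ∃ c > 0, ∀ x, aNorm A (T x) ≤ c * aNorm A x

/-- The A-operator seminorm. -/
noncomputable def opNormA (A T : H →L[ℂ] H) : ℝ :=
  sSup {r | ∃ x ∈ closure (Set.range A), aNorm A x = 1 ∧ r = aNorm A (T x)}

/-- The A-numerical radius. -/
noncomputable def wA (A T : H →L[ℂ] H) : ℝ :=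
  sSup {r | ∃ x, aNorm A x = 1 ∧ r = ‖aInner A (T x) x‖}

/-- The A-Crawford number. -/
noncomputable def cA (A T : H →L[ℂ] H) : ℝ :=
  sInf {r | ∃ x, aNorm A x = 1 ∧ r = ‖aInner A (T x) x‖}

/-- The `A_α`-seminorm `‖T‖_{A,α}`. -/
noncomputable def alphaNorm (A T : H →L[ℂ] H) (α : ℝ) : ℝ :=
  sSup {r | ∃ x, aNorm A x = 1 ∧
    r = Real.sqrt (α * ‖aInner A (T x) x‖ ^ 2 + (1 - α) * aNorm A (T x) ^ 2)}

/-- `S` is the A-adjoint `T^{♯_A}` of `T`: the solution of `A X = T* A` whose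
range lies in the closure of the range of `A`. -/
def IsAAdjoint (A T S : H →L[ℂ] H) : Prop :=
  A ∘L S = (ContinuousLinearMap.adjoint T) ∘L A ∧ ∀ x, S x ∈ closure (Set.range A)

section ASemiInner

variable {E : Type*} [NormedAddCommGroup E] [InnerProductSpace ℂ E] {A : E →L[ℂ] E}

theorem aNorm_nonneg (x : E) : 0 ≤ aNorm A x := Real.sqrt_nonneg _

theorem aNorm_smul (c : ℂ) (x : E) : aNorm A (c • x) = ‖c‖ * aNorm A x := by
  have h : (aInner A (c • x) (c • x)).re = ‖c‖ ^ 2 * (aInner A x x).re := by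
    simp only [aInner, map_smul, inner_smul_left, inner_smul_right, ← mul_assoc,
      Complex.mul_conj', ← Complex.ofReal_pow, Complex.re_ofReal_mul]
  rw [aNorm, aNorm, h, Real.sqrt_mul (sq_nonneg _), Real.sqrt_sq (norm_nonneg _)]

theorem aInner_add_left (x y z : E) : aInner A (x + y) z = aInner A x z + aInner A y z := by
  simp only [aInner, map_add, inner_add_left]

theorem aInner_smul_left (c : ℂ) (x y : E) :
    aInner A (c • x) y = starRingEnd ℂ c * aInner A x y := by
  simp only [aInner, map_smul, inner_smul_left]

end ASemiInner

section ASqrt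

variable {A : H →L[ℂ] H}

theorem aInner_eq_inner_sqrt (hA : A.IsPositive) (x y : H) :
    aInner A x y = inner ℂ (CFC.sqrt A x) (CFC.sqrt A y) := by
  have hA' : 0 ≤ A := (nonneg_iff_isPositive A).2 hA
  calc aInner A x y = inner ℂ (CFC.sqrt A (CFC.sqrt A x)) y := by
        conv_lhs => rw [aInner, ← CFC.sqrt_mul_sqrt_self A hA']
        rfl
    _ = inner ℂ (CFC.sqrt A x) (CFC.sqrt A y) := by
        rw [← adjoint_inner_right, (CFC.sqrt_nonneg A).isSelfAdjoint.adjoint_eq]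

theorem aNorm_eq_norm_sqrt (hA : A.IsPositive) (x : H) : aNorm A x = ‖CFC.sqrt A x‖ := by
  rw [aNorm, aInner_eq_inner_sqrt hA]
  exact (norm_eq_sqrt_re_inner (𝕜 := ℂ) _).symm

theorem norm_aInner_le (hA : A.IsPositive) (x y : H) :
    ‖aInner A x y‖ ≤ aNorm A x * aNorm A y := by
  rw [aInner_eq_inner_sqrt hA, aNorm_eq_norm_sqrt hA, aNorm_eq_norm_sqrt hA]
  exact norm_inner_le_norm _ _

theorem aNorm_add_le (hA : A.IsPositive) (x y : H) :
    aNorm A (x + y) ≤ aNorm A x + aNorm A y := by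
  simp only [aNorm_eq_norm_sqrt hA, map_add]
  exact norm_add_le _ _

end ASqrt

theorem sqrt_weighted_sq_add_le {a b : ℝ} (ha : 0 ≤ a) (hb : 0 ≤ b) (u₁ u₂ v₁ v₂ : ℝ) :
    √(a * (u₁ + u₂) ^ 2 + b * (v₁ + v₂) ^ 2) ≤
      √(a * u₁ ^ 2 + b * v₁ ^ 2) + √(a * u₂ ^ 2 + b * v₂ ^ 2) := by
  set X := a * u₁ ^ 2 + b * v₁ ^ 2
  set Y := a * u₂ ^ 2 + b * v₂ ^ 2
  have hX : 0 ≤ X := by positivity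
  have hY : 0 ≤ Y := by positivity
  -- Lagrange's identity: `X * Y - (a u₁ u₂ + b v₁ v₂)² = a b (u₁ v₂ - u₂ v₁)²`.
  have cauchy_schwarz : a * (u₁ * u₂) + b * (v₁ * v₂) ≤ √X * √Y := by
    rw [← Real.sqrt_mul hX]
    refine (le_abs_self _).trans (Real.abs_le_sqrt ?_)
    nlinarith [mul_nonneg (mul_nonneg ha hb) (sq_nonneg (u₁ * v₂ - u₂ * v₁))]
  rw [Real.sqrt_le_iff]
  refine ⟨by positivity, ?_⟩
  nlinarith [Real.sq_sqrt hX, Real.sq_sqrt hY]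

section AlphaNormGeneral

variable {E : Type*} [NormedAddCommGroup E] [InnerProductSpace ℂ E]

noncomputable def alphaNormAt (A T : E →L[ℂ] E) (α : ℝ) (x : E) : ℝ :=
  √(α * ‖aInner A (T x) x‖ ^ 2 + (1 - α) * aNorm A (T x) ^ 2)

variable {A T : E →L[ℂ] E} {α : ℝ}

theorem alphaNorm_eq_iSup :
    alphaNorm A T α = ⨆ x : {x : E // aNorm A x = 1}, alphaNormAt A T α x := by
  rw [alphaNorm, iSup]
  congr 1
  ext r
  simp [alphaNormAt, eq_comm]

theorem alphaNorm_nonneg : 0 ≤ alphaNorm A T α := by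
  rw [alphaNorm_eq_iSup]
  exact Real.iSup_nonneg fun _ => Real.sqrt_nonneg _

theorem alphaNormAt_smul (c : ℂ) (x : E) :
    alphaNormAt A (c • T) α x = ‖c‖ * alphaNormAt A T α x := by
  simp only [alphaNormAt, smul_apply, aInner_smul_left, norm_mul, RCLike.norm_conj, aNorm_smul]
  rw [mul_pow, mul_pow, mul_left_comm α, mul_left_comm (1 - α), ← mul_add,
    Real.sqrt_mul (sq_nonneg _), Real.sqrt_sq (norm_nonneg c)]

theorem alphaNorm_smul (c : ℂ) : alphaNorm A (c • T) α = ‖c‖ * alphaNorm A T α := by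
  simp only [alphaNorm_eq_iSup, alphaNormAt_smul, Real.mul_iSup_of_nonneg (norm_nonneg c)]

end AlphaNormGeneral

section AlphaNorm

variable {A T S : H →L[ℂ] H} {α : ℝ}

theorem alphaNormAt_add_le (hA : A.IsPositive) (hα : α ∈ Set.Icc (0 : ℝ) 1) (x : H) :
    alphaNormAt A (T + S) α x ≤ alphaNormAt A T α x + alphaNormAt A S α x := by
  have hinner : ‖aInner A ((T + S) x) x‖ ≤ ‖aInner A (T x) x‖ + ‖aInner A (S x) x‖ := by
    rw [add_apply, aInner_add_left]
    exact norm_add_le _ _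
  have hnorm : aNorm A ((T + S) x) ≤ aNorm A (T x) + aNorm A (S x) := by
    rw [add_apply]
    exact aNorm_add_le hA _ _
  have hα₀ := hα.1
  have hα₁ : 0 ≤ 1 - α := sub_nonneg.2 hα.2
  calc alphaNormAt A (T + S) α x
      ≤ √(α * (‖aInner A (T x) x‖ + ‖aInner A (S x) x‖) ^ 2
          + (1 - α) * (aNorm A (T x) + aNorm A (S x)) ^ 2) := by
        unfold alphaNormAt
        have := aNorm_nonneg (A := A) ((T + S) x)
        gcongr
    _ ≤ alphaNormAt A T α x + alphaNormAt A S α x := sqrt_weighted_sq_add_le hα₀ hα₁ _ _ _ _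

theorem alphaNormAt_le (hA : A.IsPositive) (hα : α ∈ Set.Icc (0 : ℝ) 1) {c : ℝ}
    (hT : ∀ y, aNorm A (T y) ≤ c * aNorm A y) {x : H} (hx : aNorm A x = 1) :
    alphaNormAt A T α x ≤ c := by
  have hnorm : aNorm A (T x) ≤ c := by simpa [hx] using hT x
  have hinner : ‖aInner A (T x) x‖ ≤ c :=
    calc ‖aInner A (T x) x‖ ≤ aNorm A (T x) * aNorm A x := norm_aInner_le hA _ _
      _ ≤ c := by rwa [hx, mul_one]
  have hTx := aNorm_nonneg (A := A) (T x)
  have hc : 0 ≤ c := hTx.trans hnorm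
  have hα₀ := hα.1
  have hα₁ : 0 ≤ 1 - α := sub_nonneg.2 hα.2
  calc alphaNormAt A T α x ≤ √(α * c ^ 2 + (1 - α) * c ^ 2) := by
        unfold alphaNormAt
        gcongr
    _ = c := by rw [← add_mul, add_sub_cancel, one_mul, Real.sqrt_sq hc]

theorem ABounded.bddAbove_alphaNormAt (hA : A.IsPositive) (hα : α ∈ Set.Icc (0 : ℝ) 1)
    (hT : ABounded A T) :
    BddAbove (Set.range fun x : {x : H // aNorm A x = 1} => alphaNormAt A T α x) := by
  obtain ⟨c, -, hc⟩ := hT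
  exact ⟨c, Set.forall_mem_range.2 fun x => alphaNormAt_le hA hα hc x.2⟩

theorem alphaNorm_add_le (hA : A.IsPositive) (hα : α ∈ Set.Icc (0 : ℝ) 1) (hT : ABounded A T)
    (hS : ABounded A S) : alphaNorm A (T + S) α ≤ alphaNorm A T α + alphaNorm A S α := by
  have hle : ∀ x : {x : H // aNorm A x = 1},
      alphaNormAt A (T + S) α x ≤ alphaNorm A T α + alphaNorm A S α := fun x => by
    rw [alphaNorm_eq_iSup, alphaNorm_eq_iSup]
    exact (alphaNormAt_add_le hA hα x).trans <| add_le_add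
      (le_ciSup (hT.bddAbove_alphaNormAt hA hα) x) (le_ciSup (hS.bddAbove_alphaNormAt hA hα) x)
  rw [alphaNorm_eq_iSup]
  exact Real.iSup_le hle (add_nonneg alphaNorm_nonneg alphaNorm_nonneg)

end AlphaNorm

theorem stmt2 (A : H →L[ℂ] H) (hA : A.IsPositive) (α : ℝ) (hα : α ∈ Set.Icc (0:ℝ) 1) :
    (∀ T : H →L[ℂ] H, ABounded A T → 0 ≤ alphaNorm A T α) ∧
    (∀ T S : H →L[ℂ] H, ABounded A T → ABounded A S →
      alphaNorm A (T + S) α ≤ alphaNorm A T α + alphaNorm A S α) ∧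
    (∀ (c : ℂ) (T : H →L[ℂ] H), ABounded A T →
      alphaNorm A (c • T) α = ‖c‖ * alphaNorm A T α) :=
  ⟨fun _ _ => alphaNorm_nonneg, fun _ _ hT hS => alphaNorm_add_le hA hα hT hS,
    fun c _ _ => alphaNorm_smul c⟩
end

section
/- If T admits an A-adjoint and U is an A-unitary operator, then ‖U T U^{♯A}‖_{A,α} = ‖T‖_{A,α} for every α ∈ [0,1]. -/
open scoped ComplexOrder
open ContinuousLinearMap Filter Topology

variable {H : Type*} [NormedAddCommGroup H] [InnerProductSpace ℂ H] [CompleteSpace H]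

/-!
An `A`-isometry `U` satisfies `U* A U = A`, so `U^♯ U x - x ∈ ker A`. An operator with an
`A`-adjoint preserves `ker A`, hence `⟨T x, x⟩_A` and `‖T x‖_A` do not change when `x` is replaced
by `U^♯ U x`. Since moreover `⟨U T U^♯ x, x⟩_A = ⟨T U^♯ x, U^♯ x⟩_A` and
`‖U T U^♯ x‖_A = ‖T U^♯ x‖_A`, the maps `x ↦ U^♯ x` and `y ↦ U y` show that the two sets whose
suprema define the seminorms coincide.
-/

section ASemiInner

variable {E : Type*} [NormedAddCommGroup E] [InnerProductSpace ℂ E] {A : E →L[ℂ] E}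

lemma aInner_congr (hA : A.IsSymmetric) {u u' v v' : E} (hu : A u = A u') (hv : A v = A v') :
    aInner A u v = aInner A u' v' := by
  unfold aInner
  calc inner ℂ (A u) v = inner ℂ u' (A v) := hu ▸ hA u' v
    _ = inner ℂ (A u') v' := hv ▸ (hA u' v').symm

lemma aNorm_congr (hA : A.IsSymmetric) {u v : E} (h : A u = A v) : aNorm A u = aNorm A v := by
  unfold aNorm
  rw [aInner_congr hA h h]

lemma aInner_self_eq_of_aNorm_eq (hA : A.IsPositive) {u v : E} (h : aNorm A u = aNorm A v) :
    aInner A u u = aInner A v v := by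
  have hre := (Real.sqrt_inj (hA.re_inner_nonneg_left u) (hA.re_inner_nonneg_left v)).mp h
  have hu := hA.isSymmetric.coe_re_inner_apply_self u
  have hv := hA.isSymmetric.coe_re_inner_apply_self v
  simp only [coe_coe] at hu hv
  unfold aInner
  rw [← hu, ← hv, hre]

variable [CompleteSpace E]

lemma IsAAdjoint.aInner_apply_left {T S : E →L[ℂ] E} (hS : IsAAdjoint A T S)
    (hA : A.IsSymmetric) (u v : E) : aInner A (T u) v = aInner A u (S v) := by
  unfold aInner
  calc inner ℂ (A (T u)) v = inner ℂ (T u) (A v) := hA _ _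
    _ = inner ℂ u (A (S v)) := by rw [← adjoint_inner_right, ← comp_apply, ← hS.1, comp_apply]
    _ = inner ℂ (A u) (S v) := (hA _ _).symm

/-- An operator admitting an `A`-adjoint maps `ker A` into itself. -/
lemma IsAAdjoint.apply_eq_of_apply_eq {T S : E →L[ℂ] E} (hS : IsAAdjoint A T S)
    (hA : A.IsSymmetric) {u v : E} (h : A u = A v) : A (T u) = A (T v) :=
  ext_inner_right ℂ fun w => by
    simpa only [aInner] using (hS.aInner_apply_left hA u w).trans
      ((aInner_congr hA h rfl).trans (hS.aInner_apply_left hA v w).symm)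

-- polarization: `⟪U* A U x, x⟫ = ⟪A x, x⟫` for all `x` forces `U* A U = A`
lemma adjoint_comp_comp_eq_of_aNorm_apply_eq (hA : A.IsPositive) {U : E →L[ℂ] E}
    (hU : ∀ x, aNorm A (U x) = aNorm A x) : adjoint U ∘L A ∘L U = A := by
  refine coe_injective ((ext_inner_map _ _).mp fun x => ?_)
  simpa only [coe_coe, comp_apply, adjoint_inner_left, aInner] using
    aInner_self_eq_of_aNorm_eq hA (hU x)

lemma IsAAdjoint.apply_apply_eq_of_aNorm_apply_eq (hA : A.IsPositive) {U US : E →L[ℂ] E}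
    (hUS : IsAAdjoint A U US) (hU : ∀ x, aNorm A (U x) = aNorm A x) (x : E) :
    A (US (U x)) = A x := by
  conv_rhs => rw [← adjoint_comp_comp_eq_of_aNorm_apply_eq hA hU]
  rw [← comp_apply A US, hUS.1]
  rfl

end ASemiInner

theorem stmt7_general (A T U US : H →L[ℂ] H) (hA : A.IsPositive)
    (hT : ∃ S, IsAAdjoint A T S) (hU : IsAAdjoint A U US)
    (hUuni : ∀ x : H, aNorm A (U x) = aNorm A x ∧ aNorm A (US x) = aNorm A x)
    (α : ℝ) :
    alphaNorm A (U ∘L T ∘L US) α = alphaNorm A T α := by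
  obtain ⟨S, hS⟩ := hT
  have hA' : A.IsSymmetric := hA.isSymmetric
  have hUUS (y : H) : A (US (U y)) = A y :=
    hU.apply_apply_eq_of_aNorm_apply_eq hA (fun x => (hUuni x).1) y
  have hTUUS (y : H) : A (T (US (U y))) = A (T y) := hS.apply_eq_of_apply_eq hA' (hUUS y)
  unfold alphaNorm
  congr 1
  ext r
  simp only [Set.mem_ofPred_eq, comp_apply, (hUuni _).1, hU.aInner_apply_left hA']
  constructor
  · rintro ⟨x, hx, rfl⟩
    exact ⟨US x, (hUuni x).2.trans hx, rfl⟩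
  · rintro ⟨y, hy, rfl⟩
    refine ⟨U y, (hUuni y).1.trans hy, ?_⟩
    rw [aInner_congr hA' (hTUUS y) (hUUS y), aNorm_congr hA' (hTUUS y)]

theorem stmt7 (A T U US : H →L[ℂ] H) (hA : A.IsPositive)
    (hT : ∃ S, IsAAdjoint A T S) (hU : IsAAdjoint A U US)
    (hUuni : ∀ x : H, aNorm A (U x) = aNorm A x ∧ aNorm A (US x) = aNorm A x)
    (α : ℝ) (hα : α ∈ Set.Icc (0:ℝ) 1) :
    alphaNorm A (U ∘L T ∘L US) α = alphaNorm A T α :=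
  stmt7_general A T U US hA hT hU hUuni α
end
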